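/- Let π = 1 + 4i ∈ ℤ[i], so that 𝔽 = ℤ[i]/(π) is a field with 17 elements. Let C ⊆ 𝔽⁴ be an 𝔽-linear subspace that is self-dual, i.e., C = C^⊥ where C^⊥ = { x ∈ 𝔽⁴ : Σ_{j=1}^{4} x_j c_j = 0 for all c ∈ C }. Then C contains a nonzero codeword of Mannheim weight at most 5; that is, the minimum Mannheim distance of C satisfies d_π(C) ≤ 5. -/
import Mathlib


open scoped Classical

noncomputable section

set_option synthInstance.maxHeartbeats 1000000
set_option maxHeartbeats 2000000
set_option linter.unnecessarySeqFocus false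
set_option linter.unusedTactic false

/-- The quotient ring `ℤ[i]/(π)`. -/
abbrev GQuot (pi : GaussianInt) : Type := GaussianInt ⧸ Ideal.span {pi}

/-- The quotient map `ℤ[i] → ℤ[i]/(π)`. -/
def gmk (pi : GaussianInt) : GaussianInt →+* GQuot pi := Ideal.Quotient.mk (Ideal.span {pi})

/-- Mannheim weight of an element of `ℤ[i]/(π)`:
the minimum of `|x| + |y|` over representatives `x + y·i`. -/
def mWt (pi : GaussianInt) (α : GQuot pi) : ℕ :=
  sInf { w : ℕ | ∃ z : GaussianInt, gmk pi z = α ∧ z.re.natAbs + z.im.natAbs = w }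

/-- Mannheim weight of a vector: the sum of the Mannheim weights of its coordinates. -/
def mWtVec (pi : GaussianInt) {n : ℕ} (v : Fin n → GQuot pi) : ℕ := ∑ i, mWt pi (v i)

/-- The Euclidean dual of a linear code `C ⊆ R^n`. -/
def dualCode {R : Type*} [CommRing R] {n : ℕ} (C : Submodule R (Fin n → R)) :
    Submodule R (Fin n → R) where
  carrier := { x | ∀ c ∈ C, ∑ j, x j * c j = 0 }
  add_mem' := by
    intro x y hx hy c hc
    have : (∑ j, (x + y) j * c j) = (∑ j, x j * c j) + ∑ j, y j * c j := by
      rw [← Finset.sum_add_distrib]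
      exact Finset.sum_congr rfl fun j _ => by simp [add_mul]
    simp only [Set.mem_setOf_eq] at *
    rw [this, hx c hc, hy c hc, add_zero]
  zero_mem' := by
    intro c hc
    simp
  smul_mem' := by
    intro r x hx c hc
    have : (∑ j, (r • x) j * c j) = r * ∑ j, x j * c j := by
      rw [Finset.mul_sum]
      exact Finset.sum_congr rfl fun j _ => by simp [mul_assoc]
    simp only [Set.mem_setOf_eq] at *
    rw [this, hx c hc, mul_zero]

def f17 : GaussianInt →+* ZMod 17 := Zsqrtd.lift ⟨4, by decide⟩

lemma f17_pi : f17 ⟨1,4⟩ = 0 := by decide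

def phi17 : GQuot (⟨1,4⟩ : GaussianInt) →+* ZMod 17 :=
  Ideal.Quotient.lift _ f17 (by
    intro a ha
    rw [Ideal.mem_span_singleton] at ha
    obtain ⟨b, rfl⟩ := ha
    rw [map_mul, f17_pi, zero_mul])

lemma phi17_gmk (z : GaussianInt) : phi17 (gmk _ z) = f17 z := rfl

lemma pi_dvd (z : GaussianInt) (h : (17:ℤ) ∣ z.re + 4*z.im) : (⟨1,4⟩:GaussianInt) ∣ z := by
  obtain ⟨t, ht⟩ := h
  refine ⟨⟨t, z.im - 4*t⟩, ?_⟩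
  ext <;> simp [Zsqrtd.re_mul, Zsqrtd.im_mul] <;> omega

lemma f17_eq (z : GaussianInt) : f17 z = ((z.re + 4*z.im : ℤ) : ZMod 17) := by
  have : z = ⟨z.re, z.im⟩ := rfl
  rw [this]
  show (Zsqrtd.lift ⟨(4 : ZMod 17), by decide⟩) ⟨z.re, z.im⟩ = _
  simp [Zsqrtd.lift]
  push_cast
  ring

set_option synthInstance.maxHeartbeats 1000000 in
lemma phi17_inj : Function.Injective phi17 := by
  rw [injective_iff_map_eq_zero]
  intro x hx
  obtain ⟨z, rfl⟩ := Ideal.Quotient.mk_surjective x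
  have hz : f17 z = 0 := hx
  rw [f17_eq, ZMod.intCast_zmod_eq_zero_iff_dvd] at hz
  exact Ideal.Quotient.eq_zero_iff_mem.mpr (Ideal.mem_span_singleton.mpr (pi_dvd z (by exact_mod_cast hz)))

lemma rep_exists (α : GQuot (⟨1,4⟩ : GaussianInt)) :
    ∃ k : Fin 17, α = gmk _ ((k:ℕ) : GaussianInt) := by
  obtain ⟨z, rfl⟩ := Ideal.Quotient.mk_surjective α
  set n : ℤ := (z.re + 4*z.im) % 17 with hn
  have h0 : 0 ≤ n := Int.emod_nonneg _ (by norm_num)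
  have h17 : n < 17 := Int.emod_lt_of_pos _ (by norm_num)
  refine ⟨⟨n.toNat, by omega⟩, ?_⟩
  have hmod : (17:ℤ) ∣ (z.re + 4*z.im) - n := Int.dvd_self_sub_of_emod_eq rfl
  symm
  show gmk _ _ = gmk _ z
  rw [gmk, Ideal.Quotient.mk_eq_mk_iff_sub_mem, Ideal.mem_span_singleton]
  apply pi_dvd
  have hre : (((n.toNat : ℕ) : GaussianInt) - z).re = n - z.re := by
    simp [Zsqrtd.re_sub]; omega
  have him : (((n.toNat : ℕ) : GaussianInt) - z).im = - z.im := by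
    simp [Zsqrtd.im_sub]
  rw [hre, him]
  omega

def wTab : Fin 17 → ℕ := ![0,1,2,2,1,2,3,3,2,2,3,3,2,1,2,2,1]

def rTab : Fin 17 → GaussianInt :=
  ![⟨0,0⟩,⟨1,0⟩,⟨2,0⟩,⟨-1,1⟩,⟨0,1⟩,⟨1,1⟩,⟨2,1⟩,⟨-1,2⟩,⟨0,2⟩,⟨0,-2⟩,⟨1,-2⟩,⟨-2,-1⟩,⟨-1,-1⟩,⟨0,-1⟩,⟨1,-1⟩,⟨-2,0⟩,⟨-1,0⟩]

def qTab : Fin 17 → GaussianInt :=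
  ![⟨0,0⟩,⟨0,0⟩,⟨0,0⟩,⟨0,1⟩,⟨0,1⟩,⟨0,1⟩,⟨0,1⟩,⟨0,2⟩,⟨0,2⟩,⟨-1,2⟩,⟨-1,2⟩,⟨-1,3⟩,⟨-1,3⟩,⟨-1,3⟩,⟨-1,3⟩,⟨-1,4⟩,⟨-1,4⟩]

lemma rep_sub (k : Fin 17) : rTab k - ((k:ℕ) : GaussianInt) = (⟨1,4⟩ : GaussianInt) * qTab k := by
  fin_cases k <;> decide

lemma gmk_rTab (k : Fin 17) : gmk (⟨1,4⟩ : GaussianInt) (rTab k) = gmk _ ((k:ℕ)) := by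
  rw [gmk, Ideal.Quotient.mk_eq_mk_iff_sub_mem, Ideal.mem_span_singleton]
  exact ⟨qTab k, rep_sub k⟩

lemma mWt_le_table (k : Fin 17) :
    mWt (⟨1,4⟩ : GaussianInt) (gmk _ ((k:ℕ))) ≤ wTab k := by
  refine le_trans (Nat.sInf_le ⟨rTab k, gmk_rTab k, rfl⟩) ?_
  fin_cases k <;> decide

lemma mWt_le_three (α : GQuot (⟨1,4⟩ : GaussianInt)) : mWt _ α ≤ 3 := by
  obtain ⟨k, rfl⟩ := rep_exists α
  exact le_trans (mWt_le_table k) (by fin_cases k <;> decide)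

lemma mWt_zero : mWt (⟨1,4⟩ : GaussianInt) 0 = 0 :=
  Nat.le_zero.mp (Nat.sInf_le ⟨0, map_zero _, rfl⟩)

lemma mWt_one : mWt (⟨1,4⟩ : GaussianInt) 1 ≤ 1 :=
  Nat.sInf_le ⟨1, map_one _, rfl⟩

lemma quad_key : ∀ k l : Fin 17, ((k:ℕ):ZMod 17)^2 + ((l:ℕ):ZMod 17)^2 = -1 → wTab k + wTab l ≤ 4 := by decide

lemma quad (a b : GQuot (⟨1,4⟩ : GaussianInt)) (h : a^2 + b^2 = -1) :
    mWt _ a + mWt _ b ≤ 4 := by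
  obtain ⟨k, rfl⟩ := rep_exists a
  obtain ⟨l, rfl⟩ := rep_exists b
  have h2 := congrArg phi17 h
  rw [map_add, map_pow, map_pow, phi17_gmk, phi17_gmk, map_natCast, map_natCast,
    map_neg, map_one] at h2
  exact le_trans (add_le_add (mWt_le_table k) (mWt_le_table l)) (quad_key k l h2)

lemma one_ne_zero17 : (1 : GQuot (⟨1,4⟩ : GaussianInt)) ≠ 0 := by
  intro h
  have := congrArg phi17 h
  rw [map_one, map_zero] at this
  exact absurd this (by decide)

lemma exists_inv (a : GQuot (⟨1,4⟩ : GaussianInt)) (ha : a ≠ 0) : ∃ b, a * b = 1 := by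
  haveI : Fact (Nat.Prime 17) := ⟨by norm_num⟩
  have hpa : phi17 a ≠ 0 := fun h => ha (phi17_inj (by rw [h, map_zero]))
  obtain ⟨z, hz⟩ := ZMod.intCast_surjective ((phi17 a)⁻¹)
  refine ⟨gmk _ ((z : GaussianInt)), phi17_inj ?_⟩
  rw [map_mul, map_one, phi17_gmk, map_intCast, hz]
  exact mul_inv_cancel₀ hpa

/-- a self-dual code `C ⊆ 𝔽⁴`, `𝔽 = ℤ[i]/(1+4i) ≅ 𝔽₁₇`, contains a nonzero
codeword of Mannheim weight at most 5, i.e. `d_π(C) ≤ 5`. -/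
theorem stmt18 (C : Submodule (GQuot (⟨1, 4⟩ : GaussianInt))
      (Fin 4 → GQuot (⟨1, 4⟩ : GaussianInt)))
    (hsd : C = dualCode C) :
    ∃ c ∈ C, c ≠ 0 ∧ mWtVec (⟨1, 4⟩ : GaussianInt) c ≤ 5 := by
  have hmemdual : ∀ (x : Fin 4 → GQuot (⟨1,4⟩:GaussianInt)),
      x ∈ dualCode C ↔ ∀ c ∈ C, ∑ j, x j * c j = 0 := fun x => Iff.rfl
  by_cases hc1 : ∀ c ∈ C, c 1 = 0
  · refine ⟨![0,1,0,0], ?_, ?_, ?_⟩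
    · rw [hsd]
      refine (hmemdual _).mpr fun c hc => ?_
      rw [Fin.sum_univ_four]
      simp [hc1 c hc]
    · intro h
      have h1 := congrFun h 1
      simp at h1
      exact one_ne_zero17 h1
    · rw [mWtVec, Fin.sum_univ_four]
      simp only [Matrix.cons_val_zero, Matrix.cons_val_one, Matrix.head_cons,
        Matrix.cons_val_two, Matrix.tail_cons, Matrix.cons_val_three]
      have h1 := mWt_one
      have h0 := mWt_zero
      omega
  · push_neg at hc1
    obtain ⟨c, hcC, hc1⟩ := hc1
    obtain ⟨u, hu⟩ := exists_inv _ hc1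
    by_cases hd : ∃ d ∈ C, d 1 = 0 ∧ d 0 ≠ 0
    · obtain ⟨d, hdC, hd1, hd0⟩ := hd
      obtain ⟨v, hv⟩ := exists_inv _ hd0
      set e : Fin 4 → GQuot (⟨1,4⟩:GaussianInt) := v • d with he
      have heC : e ∈ C := C.smul_mem v hdC
      have he0 : e 0 = 1 := by
        rw [he, Pi.smul_apply, smul_eq_mul, mul_comm]; exact hv
      have he1 : e 1 = 0 := by
        rw [he, Pi.smul_apply, smul_eq_mul, hd1, mul_zero]
      have horth : ∑ j, e j * e j = 0 := (hmemdual e).mp (hsd ▸ heC) e heC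
      rw [Fin.sum_univ_four, he0, he1] at horth
      have hq : e 2 ^ 2 + e 3 ^ 2 = -1 := by linear_combination horth
      refine ⟨e, heC, ?_, ?_⟩
      · intro h
        have h0 := congrFun h 0
        rw [he0] at h0
        exact one_ne_zero17 h0
      · rw [mWtVec, Fin.sum_univ_four, he0, he1, mWt_zero]
        have hq4 := quad (e 2) (e 3) hq
        have h1 := mWt_one
        omega
    · push_neg at hd
      set γ := c 0 * u with hγ
      have hkey : ∀ d ∈ C, d 0 = γ * d 1 := by
        intro d hdC
        have hd'C : d - (d 1 * u) • c ∈ C := C.sub_mem hdC (C.smul_mem _ hcC)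
        have h1 : (d - (d 1 * u) • c) 1 = 0 := by
          rw [Pi.sub_apply, Pi.smul_apply, smul_eq_mul, mul_assoc, mul_comm u, hu,
            mul_one, sub_self]
        have h0 := hd _ hd'C h1
        rw [Pi.sub_apply, Pi.smul_apply, smul_eq_mul, sub_eq_zero] at h0
        rw [h0, hγ]; ring
      refine ⟨![1, -γ, 0, 0], ?_, ?_, ?_⟩
      · rw [hsd]
        refine (hmemdual _).mpr fun d hdC => ?_
        rw [Fin.sum_univ_four]
        simp only [Matrix.cons_val_zero, Matrix.cons_val_one, Matrix.head_cons,
          Matrix.cons_val_two, Matrix.tail_cons, Matrix.cons_val_three]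
        rw [hkey d hdC]; ring
      · intro h
        have h0 := congrFun h 0
        simp at h0
        exact one_ne_zero17 h0
      · rw [mWtVec, Fin.sum_univ_four]
        simp only [Matrix.cons_val_zero, Matrix.cons_val_one, Matrix.head_cons,
          Matrix.cons_val_two, Matrix.tail_cons, Matrix.cons_val_three]
        have h1 := mWt_one
        have h3 := mWt_le_three (-γ)
        have h0 := mWt_zero
        omega
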